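/- R_0 equals the frontier Fr_{S_u}(f_u⁻¹(0)) of the fiber f_u⁻¹(0) in S_u and is connected; likewise L_1 equals the frontier Fr_{S_u}(f_u⁻¹(1)) of f_u⁻¹(1) in S_u and is connected. -/

import Mathlib

open Set Topology

noncomputable section

/-- A set is an `Fσ` set if it is a countable union of closed sets. -/
def IsFSigma {X : Type*} [TopologicalSpace X] (s : Set X) : Prop :=
  ∃ F : ℕ → Set X, (∀ n, IsClosed (F n)) ∧ s = ⋃ n, F n

/-- A topological space is an `F`-space if any two disjoint open `Fσ` subsets
have disjoint closures. -/
def IsFSpace (X : Type*) [TopologicalSpace X] : Prop :=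
  ∀ s t : Set X, IsOpen s → IsOpen t → IsFSigma s → IsFSigma t → Disjoint s t →
    Disjoint (closure s) (closure t)

/-- `𝐒 = ℕ × [0,1]²` where `ℕ` is discrete and `[0,1]` is the unit interval. -/
abbrev bS : Type := ℕ × (unitInterval × unitInterval)

/-- `βπ : β𝐒 → βℕ`, the Stone–Čech extension of the projection `π(n,x,y) = n`. -/
def betaPi : StoneCech bS → StoneCech ℕ :=
  stoneCechExtend (continuous_stoneCechUnit.comp continuous_fst)

/-- `βf : β𝐒 → [0,1]`, the Stone–Čech extension of `f(n,x,y) = x`. -/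
def betaF : StoneCech bS → unitInterval :=
  stoneCechExtend (continuous_fst.comp continuous_snd)

/-- `S_u = βπ⁻¹(u)`, as a subset of `β𝐒` (carrying the subspace topology). -/
def Su (u : StoneCech ℕ) : Set (StoneCech bS) := betaPi ⁻¹' {u}

/-- `f_u : S_u → [0,1]`, the restriction of `βf` to `S_u`. -/
def fu (u : StoneCech ℕ) : (Su u) → unitInterval := fun z => betaF z.1

/-- `L_t = f_u⁻¹(t) ∩ cl_{S_u} f_u⁻¹([0,t))`. -/
def Lset (u : StoneCech ℕ) (t : unitInterval) : Set (Su u) :=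
  fu u ⁻¹' {t} ∩ closure (fu u ⁻¹' (Set.Ico 0 t))

/-- `R_t = f_u⁻¹(t) ∩ cl_{S_u} f_u⁻¹((t,1])`. -/
def Rset (u : StoneCech ℕ) (t : unitInterval) : Set (Su u) :=
  fu u ⁻¹' {t} ∩ closure (fu u ⁻¹' (Set.Ioc t 1))

/-- The rectangle `P_{s,r} = S_u ∩ cl_{β𝐒}(ℕ × [s,r] × I)`, viewed as a subset of `S_u`. -/
def Pset (u : StoneCech ℕ) (s r : unitInterval) : Set (Su u) :=
  Subtype.val ⁻¹' closure (stoneCechUnit '' {p : bS | p.2.1 ∈ Set.Icc s r})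

/-- `L_{s,t} = cl_{S_u}(⋃_{s<r<t} P_{s,r})`. -/
def Lst (u : StoneCech ℕ) (s t : unitInterval) : Set (Su u) :=
  closure (⋃ r ∈ Set.Ioo s t, Pset u s r)

/-- The interior of `B` in the subspace `A`, viewed as a subset of the ambient space. -/
def relInt {Y : Type*} [TopologicalSpace Y] (A B : Set Y) : Set Y :=
  Subtype.val '' interior ((Subtype.val : A → Y) ⁻¹' B)

/-- The transfinite sequence `X_α ⊆ S_u`: `X_0 = S_u`,
`X_{α+1} = X_α \ ⋃_{t} Int_{X_α}(X_α ∩ f_u⁻¹(t))`, and `X_λ = ⋂_{β<λ} X_β` at limits. -/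
def Xseq (u : StoneCech ℕ) : Ordinal → Set (Su u) := fun α =>
  Ordinal.limitRecOn α Set.univ
    (fun _ Xa => Xa \ ⋃ t : unitInterval, relInt Xa (Xa ∩ fu u ⁻¹' {t}))
    (fun o _ ih => ⋂ (β : {β : Ordinal // β < o}), ih β.1 β.2)

/-- The bottom line `B_u = S_u ∩ cl_{β𝐒}(ℕ × I × {0})`, viewed as a subset of `S_u`. -/
def Bu (u : StoneCech ℕ) : Set (Su u) :=
  Subtype.val ⁻¹' closure (stoneCechUnit '' {p : bS | p.2.2 = 0})

/-- The top line `T_u = S_u ∩ cl_{β𝐒}(ℕ × I × {1})`, viewed as a subset of `S_u`. -/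
def Tu (u : StoneCech ℕ) : Set (Su u) :=
  Subtype.val ⁻¹' closure (stoneCechUnit '' {p : bS | p.2.2 = 1})

/-! Near the fibre over `0`, `S_u` is reached through the strips `f_u⁻¹(0, r)`: they are open
`Fσ` sets, and connected because any two of their points lie in one of the connected rectangles
`P_{s,t}` inside them. If `R_0` split into disjoint closed pieces `A` and `B`, an Urysohn function
would separate them by open `Fσ` sets `U ⊇ A` and `V ⊇ B`, and by compactness a thin strip `W`
would lie in `U ∪ V`. Being connected, a thinner strip lies in `U ∩ W`, say, and its closure
contains `R_0`; but `B` lies in the closure of `V ∩ W`, and in an `F`-space the disjoint open `Fσ`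
sets `U ∩ W` and `V ∩ W` have disjoint closures. `L_1` is the mirror image under `t ↦ -t`. -/

section FSigma

variable {X Y : Type*} [TopologicalSpace X] [TopologicalSpace Y]

lemma IsFSigma.inter {s t : Set X} (hs : IsFSigma s) (ht : IsFSigma t) : IsFSigma (s ∩ t) := by
  obtain ⟨F, hF, rfl⟩ := hs
  obtain ⟨G, hG, rfl⟩ := ht
  refine ⟨fun n => F n.unpair.1 ∩ G n.unpair.2, fun n => (hF _).inter (hG _), ?_⟩
  rw [iUnion_inter_iUnion, iUnion_unpair (fun i j => F i ∩ G j)]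

lemma IsFSigma.preimage {f : X → Y} (hf : Continuous f) {s : Set Y} (hs : IsFSigma s) :
    IsFSigma (f ⁻¹' s) := by
  obtain ⟨F, hF, rfl⟩ := hs
  exact ⟨fun n => f ⁻¹' F n, fun n => (hF n).preimage hf, preimage_iUnion⟩

lemma isFSigma_Ioi (a : ℝ) : IsFSigma (Ioi a) := by
  refine ⟨fun n => Ici (a + 1 / (n + 1)), fun _ => isClosed_Ici, ?_⟩
  ext x
  simp only [mem_Ioi, mem_iUnion, mem_Ici]
  constructor
  · intro hx
    obtain ⟨n, hn⟩ := exists_nat_one_div_lt (sub_pos.mpr hx)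
    exact ⟨n, by linarith⟩
  · rintro ⟨n, hn⟩
    have : (0 : ℝ) < 1 / (n + 1) := by positivity
    linarith

lemma isFSigma_Iio (a : ℝ) : IsFSigma (Iio a) := by
  convert (isFSigma_Ioi (-a)).preimage continuous_neg using 1
  ext x
  simp

lemma isFSigma_Ioo (a b : ℝ) : IsFSigma (Ioo a b) := by
  rw [← Ioi_inter_Iio]
  exact (isFSigma_Ioi a).inter (isFSigma_Iio b)

end FSigma

section FSpace

variable {X : Type*} [TopologicalSpace X] {f : X → ℝ} {a : ℝ}

lemma preimage_inter_closure_Ioi_eq_iInter (hf : Continuous f) (a : ℝ) :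
    f ⁻¹' {a} ∩ closure (f ⁻¹' Ioi a) = ⋂ b : Ioi a, closure (f ⁻¹' Ioo a b) := by
  ext x
  simp only [mem_inter_iff, mem_preimage, mem_singleton_iff, mem_iInter, Subtype.forall, mem_Ioi]
  constructor
  · rintro ⟨hx, hcl⟩ b hb
    have hsplit : f ⁻¹' Ioi a ⊆ f ⁻¹' Ioo a b ∪ f ⁻¹' Ici b := fun y (hy : a < f y) =>
      (lt_or_ge (f y) b).imp (fun h => ⟨hy, h⟩) id
    rcases closure_union.subset (closure_mono hsplit hcl) with h | h
    · exact h
    · have : b ≤ f x := (isClosed_Ici.preimage hf).closure_subset h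
      linarith
  · intro h
    refine ⟨le_antisymm ?_ ?_,
      closure_mono (preimage_mono Ioo_subset_Ioi_self) (h (a + 1) (by linarith))⟩
    · refine le_of_forall_gt_imp_ge_of_dense fun b hb => ?_
      have := hf.closure_preimage_subset _ (h b hb)
      exact (closure_Ioo hb.ne ▸ this).2
    · have := hf.closure_preimage_subset _ (h (a + 1) (by linarith))
      exact (closure_Ioo (by linarith : a ≠ a + 1) ▸ this).1

lemma preimage_inter_closure_Ioi_subset (hf : Continuous f) {b : ℝ} (hb : a < b) :
    f ⁻¹' {a} ∩ closure (f ⁻¹' Ioi a) ⊆ closure (f ⁻¹' Ioo a b) :=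
  (preimage_inter_closure_Ioi_eq_iInter hf a).trans_subset
    (iInter_subset_of_subset ⟨b, hb⟩ le_rfl)

lemma directed_closure_preimage_Ioo (a : ℝ) :
    Directed (· ⊇ ·) fun b : Ioi a => closure (f ⁻¹' Ioo a b) :=
  Monotone.directed_ge fun _ _ hbc => closure_mono (preimage_mono (Ioo_subset_Ioo_right hbc))

lemma exists_preimage_Ioo_subset_of_isOpen [CompactSpace X] (hf : Continuous f) {O : Set X}
    (hO : IsOpen O) (hsub : f ⁻¹' {a} ∩ closure (f ⁻¹' Ioi a) ⊆ O) :
    ∃ b > a, f ⁻¹' Ioo a b ⊆ O := by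
  obtain ⟨⟨b, hb⟩, hbO⟩ := exists_subset_nhds_of_isCompact' (directed_closure_preimage_Ioo a)
    (fun _ => isClosed_closure.isCompact) (fun _ => isClosed_closure)
    (fun x hx => hO.mem_nhds (hsub (preimage_inter_closure_Ioi_eq_iInter hf a ▸ hx)))
  exact ⟨b, hb, subset_closure.trans hbO⟩

lemma nonempty_preimage_inter_closure_Ioi [CompactSpace X] (hf : Continuous f)
    (h : ∀ᶠ b in 𝓝[>] a, (f ⁻¹' Ioo a b).Nonempty) :
    (f ⁻¹' {a} ∩ closure (f ⁻¹' Ioi a)).Nonempty := by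
  rw [preimage_inter_closure_Ioi_eq_iInter hf]
  refine IsCompact.nonempty_iInter_of_directed_nonempty_isCompact_isClosed _
    (directed_closure_preimage_Ioo a) (fun ⟨b, hb⟩ => ?_) (fun _ => isClosed_closure.isCompact)
    (fun _ => isClosed_closure)
  obtain ⟨c, hc, hcb⟩ := (h.and (Ioo_mem_nhdsGT hb)).exists
  exact (hc.mono (preimage_mono (Ioo_subset_Ioo_right hcb.2.le))).mono subset_closure

theorem IsFSpace.isPreconnected_preimage_inter_closure_Ioi [CompactSpace X] [T2Space X]
    (hX : IsFSpace X) (hf : Continuous f) (h : ∀ᶠ b in 𝓝[>] a, IsPreconnected (f ⁻¹' Ioo a b)) :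
    IsPreconnected (f ⁻¹' {a} ∩ closure (f ⁻¹' Ioi a)) := by
  set R := f ⁻¹' {a} ∩ closure (f ⁻¹' Ioi a)
  rw [isPreconnected_iff_subset_of_fully_disjoint_closed
    ((isClosed_singleton.preimage hf).inter isClosed_closure)]
  intro A B hA hB hRAB hAB
  obtain ⟨g, hgA, hgB, -⟩ := exists_continuous_zero_one_of_isClosed hA hB hAB
  set U := g ⁻¹' Iio (1 / 2)
  set V := g ⁻¹' Ioi (1 / 2)
  have hAU : A ⊆ U := fun x hx => by simp [U, hgA hx]
  have hBV : B ⊆ V := fun x hx => by norm_num [V, hgB hx]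
  have hUo : IsOpen U := isOpen_Iio.preimage g.continuous
  have hVo : IsOpen V := isOpen_Ioi.preimage g.continuous
  obtain ⟨r, hr, hrUV⟩ := exists_preimage_Ioo_subset_of_isOpen hf (hUo.union hVo)
    (hRAB.trans (union_subset_union hAU hBV))
  set W := f ⁻¹' Ioo a r
  have hWo : IsOpen W := isOpen_Ioo.preimage hf
  have hUV : Disjoint (U ∩ W) (V ∩ W) :=
    (((Iio_disjoint_Ici le_rfl).mono_right Ioi_subset_Ici_self).preimage g).mono
      inter_subset_left inter_subset_left
  have hclUV : Disjoint (closure (U ∩ W)) (closure (V ∩ W)) :=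
    hX _ _ (hUo.inter hWo) (hVo.inter hWo)
      (((isFSigma_Iio _).preimage g.continuous).inter ((isFSigma_Ioo _ _).preimage hf))
      (((isFSigma_Ioi _).preimage g.continuous).inter ((isFSigma_Ioo _ _).preimage hf)) hUV
  have hRW : R ⊆ closure W := preimage_inter_closure_Ioi_subset hf hr
  have hRO : ∀ O, IsOpen O → ∀ x ∈ R, x ∈ O → x ∈ closure (O ∩ W) :=
    fun O hO x hx hxO => hO.inter_closure ⟨hxO, hRW hx⟩
  obtain ⟨ρ, hD, hρ⟩ := (h.and (Ioo_mem_nhdsGT hr)).exists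
  have hDW : f ⁻¹' Ioo a ρ ⊆ W := preimage_mono (Ioo_subset_Ioo_right hρ.2.le)
  have hRD : R ⊆ closure (f ⁻¹' Ioo a ρ) := preimage_inter_closure_Ioi_subset hf hρ.1
  rcases hD.subset_or_subset (hUo.inter hWo) (hVo.inter hWo) hUV
      (fun x hx => (hrUV (hDW hx)).imp (⟨·, hDW hx⟩) (⟨·, hDW hx⟩)) with hDU | hDV
  · exact Or.inl fun x hx => (hRAB hx).resolve_right fun hxB =>
      disjoint_left.mp hclUV (closure_mono hDU (hRD hx)) (hRO V hVo x hx (hBV hxB))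
  · exact Or.inr fun x hx => (hRAB hx).resolve_left fun hxA =>
      disjoint_left.mp hclUV (hRO U hUo x hx (hAU hxA)) (closure_mono hDV (hRD hx))

theorem IsFSpace.isConnected_preimage_inter_closure_Ioi [CompactSpace X] [T2Space X]
    (hX : IsFSpace X) (hf : Continuous f) (h : ∀ᶠ b in 𝓝[>] a, IsConnected (f ⁻¹' Ioo a b)) :
    IsConnected (f ⁻¹' {a} ∩ closure (f ⁻¹' Ioi a)) :=
  ⟨nonempty_preimage_inter_closure_Ioi hf (h.mono fun _ hb => hb.nonempty),
    hX.isPreconnected_preimage_inter_closure_Ioi hf (h.mono fun _ hb => hb.isPreconnected)⟩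

theorem IsFSpace.isConnected_preimage_inter_closure_Iio [CompactSpace X] [T2Space X]
    (hX : IsFSpace X) (hf : Continuous f) (h : ∀ᶠ b in 𝓝[<] a, IsConnected (f ⁻¹' Ioo b a)) :
    IsConnected (f ⁻¹' {a} ∩ closure (f ⁻¹' Iio a)) := by
  have hneg := hX.isConnected_preimage_inter_closure_Ioi hf.neg (a := -a)
    ((tendsto_neg_nhdsGT_neg.eventually h).mono fun b hb => by
      convert hb using 1
      ext x
      simp [and_comm, neg_lt])
  have hfib : (-f) ⁻¹' {-a} = f ⁻¹' {a} := by ext x; simp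
  have hside : (-f) ⁻¹' Ioi (-a) = f ⁻¹' Iio a := by ext x; simp
  rwa [hfib, hside] at hneg

end FSpace

section StoneCech

variable {u : StoneCech ℕ}

lemma continuous_betaF : Continuous betaF := continuous_stoneCechExtend _

lemma continuous_betaPi : Continuous betaPi := continuous_stoneCechExtend _

lemma betaF_stoneCechUnit (p : bS) : betaF (stoneCechUnit p) = p.2.1 :=
  congrFun (stoneCechExtend_extends _) p

lemma betaPi_stoneCechUnit (p : bS) : betaPi (stoneCechUnit p) = stoneCechUnit p.1 :=
  congrFun (stoneCechExtend_extends _) p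

lemma continuous_fu (u : StoneCech ℕ) : Continuous (fu u) :=
  continuous_betaF.comp continuous_subtype_val

lemma fu_surjective (u : StoneCech ℕ) : Function.Surjective (fu u) := by
  intro t
  have hσ : Continuous fun n : ℕ => stoneCechUnit ((n, t, 0) : bS) :=
    continuous_of_discreteTopology
  have hπ : betaPi ∘ stoneCechExtend hσ = id :=
    stoneCech_hom_ext (continuous_betaPi.comp (continuous_stoneCechExtend hσ)) continuous_id <| by
      ext n
      simp [Function.comp_def, stoneCechExtend_stoneCechUnit, betaPi_stoneCechUnit]
  have hf : betaF ∘ stoneCechExtend hσ = fun _ => t :=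
    stoneCech_hom_ext (continuous_betaF.comp (continuous_stoneCechExtend hσ)) continuous_const <| by
      ext n
      simp [Function.comp_def, stoneCechExtend_stoneCechUnit, betaF_stoneCechUnit]
  exact ⟨⟨stoneCechExtend hσ u, congrFun hπ u⟩, congrFun hf u⟩

lemma Pset_subset_preimage_Icc (s r : unitInterval) : Pset u s r ⊆ fu u ⁻¹' Icc s r :=
  fun _ hz => closure_minimal (by rintro _ ⟨p, hp, rfl⟩; rwa [mem_preimage, betaF_stoneCechUnit])
    (isClosed_Icc.preimage continuous_betaF) hz

lemma preimage_Ioo_subset_Pset (s r : unitInterval) : fu u ⁻¹' Ioo s r ⊆ Pset u s r := by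
  intro z hz
  have hdense : z.1 ∈ closure (range stoneCechUnit) := by
    rw [denseRange_stoneCechUnit.closure_range]; trivial
  refine closure_mono ?_ ((isOpen_Ioo.preimage continuous_betaF).inter_closure ⟨hz, hdense⟩)
  rintro _ ⟨hp, p, rfl⟩
  rw [mem_preimage, betaF_stoneCechUnit] at hp
  exact ⟨p, Ioo_subset_Icc_self hp, rfl⟩

lemma isConnected_preimage_Ioo_fu (hP : ∀ s r : unitInterval, s < r → IsConnected (Pset u s r))
    {a b : unitInterval} (hab : a < b) : IsConnected (fu u ⁻¹' Ioo a b) := by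
  refine ⟨?_, isPreconnected_of_forall_pair fun x hx y hy => ?_⟩
  · obtain ⟨t, ht⟩ := exists_between hab
    obtain ⟨z, rfl⟩ := fu_surjective u t
    exact ⟨z, ht⟩
  · obtain ⟨s, has, hs⟩ := exists_between (lt_min hx.1 hy.1)
    obtain ⟨t, ht, htb⟩ := exists_between (max_lt hx.2 hy.2)
    rw [lt_min_iff] at hs
    rw [max_lt_iff] at ht
    exact ⟨Pset u s t, fun z hz => Icc_subset_Ioo has htb (Pset_subset_preimage_Icc s t hz),
      preimage_Ioo_subset_Pset s t ⟨hs.1, ht.1⟩, preimage_Ioo_subset_Pset s t ⟨hs.2, ht.2⟩,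
      (hP s t (hs.1.trans ht.1)).isPreconnected⟩

lemma isConnected_preimage_Ioo_coe_fu
    (hP : ∀ s r : unitInterval, s < r → IsConnected (Pset u s r)) {a b : ℝ} (ha : 0 ≤ a)
    (hab : a < b) (hb : b ≤ 1) : IsConnected ((fun z => (fu u z : ℝ)) ⁻¹' Ioo a b) :=
  isConnected_preimage_Ioo_fu hP (a := ⟨a, ha, hab.le.trans hb⟩)
    (b := ⟨b, ha.trans hab.le, hb⟩) hab

lemma Rset_zero_eq_frontier (u : StoneCech ℕ) : Rset u 0 = frontier (fu u ⁻¹' {0}) := by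
  rw [frontier_eq_closure_inter_closure,
    (isClosed_singleton.preimage (continuous_fu u)).closure_eq, ← preimage_compl, Rset]
  congr 3
  ext t
  simp [lt_iff_le_and_ne, ne_comm, unitInterval.le_one']

lemma Lset_one_eq_frontier (u : StoneCech ℕ) : Lset u 1 = frontier (fu u ⁻¹' {1}) := by
  rw [frontier_eq_closure_inter_closure,
    (isClosed_singleton.preimage (continuous_fu u)).closure_eq, ← preimage_compl, Lset]
  congr 3
  ext t
  simp [lt_iff_le_and_ne, unitInterval.le_one']

lemma Rset_zero_eq_preimage_coe (u : StoneCech ℕ) :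
    Rset u 0 = (fun z => (fu u z : ℝ)) ⁻¹' {0} ∩ closure ((fun z => (fu u z : ℝ)) ⁻¹' Ioi 0) := by
  rw [Rset, ← unitInterval.subtype_Ioi_eq_Ioc]
  congr 1
  ext z
  exact Set.Icc.coe_eq_zero.symm

lemma Lset_one_eq_preimage_coe (u : StoneCech ℕ) :
    Lset u 1 = (fun z => (fu u z : ℝ)) ⁻¹' {1} ∩ closure ((fun z => (fu u z : ℝ)) ⁻¹' Iio 1) := by
  rw [Lset, ← unitInterval.subtype_Iio_eq_Ico]
  congr 1
  ext z
  exact Set.Icc.coe_eq_one.symm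

end StoneCech

theorem Rzero_Lone_frontier_connected_general (u : StoneCech ℕ)
    (hcomp : IsCompact (Su u))
    (hFsp : IsFSpace (Su u))
    (hP : ∀ s r : unitInterval, s < r → IsConnected (Pset u s r)) :
    Rset u 0 = frontier (fu u ⁻¹' {(0 : unitInterval)}) ∧ IsConnected (Rset u 0) ∧
    Lset u 1 = frontier (fu u ⁻¹' {(1 : unitInterval)}) ∧ IsConnected (Lset u 1) := by
  have : CompactSpace (Su u) := isCompact_iff_compactSpace.mp hcomp
  have hf : Continuous fun z => (fu u z : ℝ) := continuous_subtype_val.comp (continuous_fu u)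
  refine ⟨Rset_zero_eq_frontier u, ?_, Lset_one_eq_frontier u, ?_⟩
  · rw [Rset_zero_eq_preimage_coe]
    refine hFsp.isConnected_preimage_inter_closure_Ioi hf ?_
    filter_upwards [Ioc_mem_nhdsGT one_pos] with b hb
    exact isConnected_preimage_Ioo_coe_fu hP le_rfl hb.1 hb.2
  · rw [Lset_one_eq_preimage_coe]
    refine hFsp.isConnected_preimage_inter_closure_Iio hf ?_
    filter_upwards [Ico_mem_nhdsLT one_pos] with b hb
    exact isConnected_preimage_Ioo_coe_fu hP hb.1 hb.2 le_rfl

/-- `R_0` equals the frontier of `f_u⁻¹(0)` in `S_u` and is connected; likewise `L_1`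
equals the frontier of `f_u⁻¹(1)` in `S_u` and is connected. -/
theorem Rzero_Lone_frontier_connected (u : StoneCech ℕ)
    (hu : ∀ n : ℕ, u ≠ stoneCechUnit n)
    (hne : (Su u).Nonempty) (hcomp : IsCompact (Su u)) (hconn : IsConnected (Su u))
    (hFsp : IsFSpace (Su u))
    (hP : ∀ s r : unitInterval, s < r → IsConnected (Pset u s r)) :
    Rset u 0 = frontier (fu u ⁻¹' {(0 : unitInterval)}) ∧ IsConnected (Rset u 0) ∧
    Lset u 1 = frontier (fu u ⁻¹' {(1 : unitInterval)}) ∧ IsConnected (Lset u 1) :=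
  Rzero_Lone_frontier_connected_general u hcomp hFsp hP

end
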